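/- For every nonnegative integer a and real x with |x| ≤ 1, arcsin^(2a+1)(x)/(2a+1)! = Σ_{n=0}^∞ (C(2n,n)/((2n+1)4^n)) x^(2n+1) Σ_{0 ≤ n₁ < ... < n_a < n} 1/((2n₁+1)² ⋯ (2n_a+1)²), where for a = 0 the inner sum is 1. -/

import Mathlib

open Real

/-- `∑_{0 ≤ n₁ < ⋯ < n_a < n} 1/((2n₁+1)² ⋯ (2n_a+1)²)`; equals `1` when `a = 0`. -/
noncomputable def tHead (a n : ℕ) : ℝ :=
  ∑' f : {f : Fin a → ℕ // StrictMono f ∧ ∀ i, f i < n},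
    ∏ i, 1 / (2 * (f.1 i : ℝ) + 1) ^ 2

/-!
The inner sums are elementary symmetric functions `T_a(n)` of the weights `1/(2k+1)²`, `k < n`,
so `T_{a+1}(n+1) = T_{a+1}(n) + T_a(n)/(2n+1)²`. Combined with the ratio of consecutive central
binomial coefficients, the coefficients `c_a(n)` of the right-hand side satisfy
`(2n+2)(2n+3) c_a(n+1) = (2n+1)² c_a(n) + c_{a-1}(n)`, i.e. the odd power series
`F_a(x) = ∑ c_a(n) x^(2n+1)` satisfy `(1 - x²) F_a'' - x F_a' = F_{a-1}` (with `F_{-1} = 0`).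
Under `x = sin θ` the left-hand side becomes `d²/dθ² F_a(sin θ)`, so `G_a(θ) = F_a(sin θ)` satisfies
`G_a'' = G_{a-1}`, `G_a(0) = 0`, `G_a'(0) = [a = 0]` on `(-π/2, π/2)`; by induction
`G_a(θ) = θ^(2a+1)/(2a+1)!`. Since `C(2n,n)/4ⁿ ≤ 1/√(2n+1)`, the coefficients are `O(n^(-3/2))`,
so `G_a` is continuous and the identity extends to `θ = ±π/2`.
-/

section RangeEsymm

variable {R : Type*} [CommSemiring R] (w : ℕ → R)

def rangeEsymm (a n : ℕ) : R :=
  ∑ s ∈ (Finset.range n).powersetCard a, ∏ k ∈ s, w k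

@[simp]
lemma rangeEsymm_zero_left (n : ℕ) : rangeEsymm w 0 n = 1 := by
  simp [rangeEsymm]

@[simp]
lemma rangeEsymm_succ_zero (a : ℕ) : rangeEsymm w (a + 1) 0 = 0 := by
  rw [rangeEsymm, Finset.range_zero, Finset.powersetCard_eq_empty.2 (by simp), Finset.sum_empty]

lemma rangeEsymm_succ_succ (a n : ℕ) :
    rangeEsymm w (a + 1) (n + 1) = rangeEsymm w (a + 1) n + w n * rangeEsymm w a n := by
  have hn : n ∉ Finset.range n := Finset.notMem_range_self
  have hnot : ∀ s ∈ (Finset.range n).powersetCard a, n ∉ s := fun s hs h =>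
    hn ((Finset.mem_powersetCard.1 hs).1 h)
  rw [rangeEsymm, Finset.range_add_one, Finset.powersetCard_succ_insert hn,
    Finset.sum_union, Finset.sum_image, rangeEsymm, rangeEsymm, Finset.mul_sum]
  · congr 1
    exact Finset.sum_congr rfl fun s hs => Finset.prod_insert (hnot s hs)
  · intro s hs t ht hst
    simpa [hnot s hs, hnot t ht] using congrArg (Finset.erase · n) hst
  · refine Finset.disjoint_left.2 fun s hs hs' => ?_
    obtain ⟨t, -, rfl⟩ := Finset.mem_image.1 hs'
    exact hn ((Finset.mem_powersetCard.1 hs).1 (Finset.mem_insert_self n t))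

lemma rangeEsymm_succ_eq_sum (a n : ℕ) :
    rangeEsymm w (a + 1) n = ∑ m ∈ Finset.range n, w m * rangeEsymm w a m := by
  induction n with
  | zero => simp
  | succ n ih => rw [rangeEsymm_succ_succ, ih, Finset.sum_range_succ]

end RangeEsymm

section RangeEsymmReal

variable {w : ℕ → ℝ}

lemma rangeEsymm_nonneg (hw : 0 ≤ w) (a n : ℕ) : 0 ≤ rangeEsymm w a n :=
  Finset.sum_nonneg fun _ _ => Finset.prod_nonneg fun k _ => hw k

lemma rangeEsymm_le_tsum_pow (hw : 0 ≤ w) (hs : Summable w) (a n : ℕ) :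
    rangeEsymm w a n ≤ (∑' k, w k) ^ a := by
  induction a generalizing n with
  | zero => simp
  | succ a ih =>
    calc rangeEsymm w (a + 1) n = ∑ m ∈ Finset.range n, w m * rangeEsymm w a m :=
          rangeEsymm_succ_eq_sum w a n
      _ ≤ ∑ m ∈ Finset.range n, w m * (∑' k, w k) ^ a :=
          Finset.sum_le_sum fun m _ => mul_le_mul_of_nonneg_left (ih m) (hw m)
      _ = (∑ m ∈ Finset.range n, w m) * (∑' k, w k) ^ a := (Finset.sum_mul ..).symm
      _ ≤ (∑' k, w k) * (∑' k, w k) ^ a := by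
          gcongr
          · exact pow_nonneg (tsum_nonneg hw) a
          · exact hs.sum_le_tsum _ fun k _ => hw k
      _ = (∑' k, w k) ^ (a + 1) := (pow_succ' ..).symm

end RangeEsymmReal

def strictMonoLtEquiv (a n : ℕ) :
    {f : Fin a → ℕ // StrictMono f ∧ ∀ i, f i < n} ≃ (Finset.range n).powersetCard a where
  toFun f := ⟨Finset.univ.image f.1, Finset.mem_powersetCard.2
    ⟨fun k hk => by
      obtain ⟨i, -, rfl⟩ := Finset.mem_image.1 hk
      exact Finset.mem_range.2 (f.2.2 i),
    by simp [Finset.card_image_of_injective _ f.2.1.injective]⟩⟩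
  invFun s :=
    have hs := Finset.mem_powersetCard.1 s.2
    ⟨s.1.orderEmbOfFin hs.2, (s.1.orderEmbOfFin hs.2).strictMono,
      fun i => Finset.mem_range.1 (hs.1 (s.1.orderEmbOfFin_mem hs.2 i))⟩
  left_inv f := by
    ext1
    symm
    exact Finset.orderEmbOfFin_unique _
      (fun i => Finset.mem_image_of_mem _ (Finset.mem_univ i)) f.2.1
  right_inv s := Subtype.ext (Finset.image_orderEmbOfFin_univ _ _)

lemma tsum_prod_strictMono_eq_rangeEsymm {R : Type*} [CommSemiring R] [TopologicalSpace R]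
    (w : ℕ → R) (a n : ℕ) :
    ∑' f : {f : Fin a → ℕ // StrictMono f ∧ ∀ i, f i < n}, ∏ i, w (f.1 i) = rangeEsymm w a n := by
  rw [← (strictMonoLtEquiv a n).symm.tsum_eq, rangeEsymm, ← Finset.tsum_subtype]
  refine tsum_congr fun s => ?_
  have hs := Finset.mem_powersetCard.1 s.2
  conv_rhs => rw [← s.1.image_orderEmbOfFin_univ hs.2]
  exact (Finset.prod_image fun i _ j _ h => (s.1.orderEmbOfFin hs.2).injective h).symm

noncomputable def invOddSq (k : ℕ) : ℝ := 1 / (2 * (k : ℝ) + 1) ^ 2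

lemma invOddSq_nonneg : 0 ≤ invOddSq := fun k => by unfold invOddSq; positivity

lemma summable_invOddSq : Summable invOddSq := by
  refine Summable.of_nonneg_of_le invOddSq_nonneg (fun k => ?_)
    ((summable_nat_add_iff 1).2 (Real.summable_one_div_nat_pow.2 one_lt_two))
  unfold invOddSq
  gcongr
  push_cast
  linarith [(k.cast_nonneg : (0:ℝ) ≤ k)]

lemma tHead_eq_rangeEsymm (a n : ℕ) : tHead a n = rangeEsymm invOddSq a n :=
  tsum_prod_strictMono_eq_rangeEsymm invOddSq a n

noncomputable def arcsinCoeff (n : ℕ) : ℝ := (2 * n).choose n / ((2 * (n : ℝ) + 1) * 4 ^ n)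

lemma arcsinCoeff_zero : arcsinCoeff 0 = 1 := by simp [arcsinCoeff]

lemma arcsinCoeff_nonneg (n : ℕ) : 0 ≤ arcsinCoeff n := by unfold arcsinCoeff; positivity

lemma arcsinCoeff_le_one (n : ℕ) : arcsinCoeff n ≤ 1 := by
  rw [arcsinCoeff, div_le_one (by positivity)]
  have : ((2 * n).choose n : ℝ) ≤ 4 ^ n := by exact_mod_cast Nat.centralBinom_le_four_pow n
  nlinarith [(n.cast_nonneg : (0:ℝ) ≤ n), pow_pos (by norm_num : (0:ℝ) < 4) n]

lemma arcsinCoeff_succ_mul (n : ℕ) :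
    arcsinCoeff (n + 1) * ((2 * n + 2) * (2 * n + 3)) = arcsinCoeff n * (2 * n + 1) ^ 2 := by
  have h : ((n : ℝ) + 1) * (2 * (n + 1)).choose (n + 1) = 2 * (2 * n + 1) * (2 * n).choose n := by
    exact_mod_cast Nat.succ_mul_centralBinom_succ n
  rw [arcsinCoeff, arcsinCoeff, pow_succ]
  push_cast
  field_simp
  linear_combination 2 * (2 * (n:ℝ) + 3) * h

lemma arcsinCoeff_sq_mul_le_one (n : ℕ) : arcsinCoeff n ^ 2 * (2 * n + 1) ^ 3 ≤ 1 := by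
  induction n with
  | zero => simp [arcsinCoeff_zero]
  | succ n ih =>
    have hsq : arcsinCoeff (n + 1) ^ 2 * (2 * n + 3) ^ 3 * (2 * n + 2) ^ 2
        = arcsinCoeff n ^ 2 * (2 * n + 1) ^ 3 * ((2 * n + 1) * (2 * n + 3)) := by
      linear_combination (arcsinCoeff (n + 1) * ((2 * n + 2) * (2 * n + 3))
        + arcsinCoeff n * (2 * n + 1) ^ 2) * (2 * n + 3) * arcsinCoeff_succ_mul n
    have hle : arcsinCoeff (n + 1) ^ 2 * (2 * n + 3) ^ 3 * (2 * n + 2) ^ 2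
        ≤ 1 * (2 * n + 2) ^ 2 := by
      rw [hsq]
      exact mul_le_mul ih (by nlinarith) (by positivity) zero_le_one
    push_cast
    linarith [le_of_mul_le_mul_right hle (by positivity)]

lemma arcsinCoeff_le_rpow (n : ℕ) : arcsinCoeff n ≤ ((n : ℝ) + 1) ^ (-(3 / 2) : ℝ) := by
  have hn : (0:ℝ) < n + 1 := by positivity
  rw [← pow_le_pow_iff_left₀ (arcsinCoeff_nonneg n) (by positivity) two_ne_zero,
    ← Real.rpow_mul_natCast hn.le, show (-(3 / 2) : ℝ) * (2 : ℕ) = -(3 : ℕ) by norm_num,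
    Real.rpow_neg hn.le, Real.rpow_natCast, ← one_div, le_div_iff₀ (by positivity)]
  refine le_trans ?_ (arcsinCoeff_sq_mul_le_one n)
  gcongr
  linarith [(n.cast_nonneg : (0:ℝ) ≤ n)]

lemma summable_arcsinCoeff : Summable arcsinCoeff :=
  .of_nonneg_of_le arcsinCoeff_nonneg arcsinCoeff_le_rpow <| by
    simpa using
      (summable_nat_add_iff 1).2 (Real.summable_nat_rpow.2 (by norm_num : -(3 / 2 : ℝ) < -1))

noncomputable def arcsinPowCoeff (a n : ℕ) : ℝ := arcsinCoeff n * rangeEsymm invOddSq a n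

lemma arcsinPowCoeff_nonneg (a n : ℕ) : 0 ≤ arcsinPowCoeff a n :=
  mul_nonneg (arcsinCoeff_nonneg n) (rangeEsymm_nonneg invOddSq_nonneg a n)

lemma abs_arcsinPowCoeff_le (a n : ℕ) :
    |arcsinPowCoeff a n| ≤ arcsinCoeff n * (∑' k, invOddSq k) ^ a := by
  rw [abs_of_nonneg (arcsinPowCoeff_nonneg a n)]
  exact mul_le_mul_of_nonneg_left
    (rangeEsymm_le_tsum_pow invOddSq_nonneg summable_invOddSq a n) (arcsinCoeff_nonneg n)

lemma abs_arcsinPowCoeff_le_pow (a n : ℕ) : |arcsinPowCoeff a n| ≤ (∑' k, invOddSq k) ^ a :=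
  (abs_arcsinPowCoeff_le a n).trans <|
    mul_le_of_le_one_left (pow_nonneg (tsum_nonneg invOddSq_nonneg) a) (arcsinCoeff_le_one n)

lemma summable_abs_arcsinPowCoeff (a : ℕ) : Summable fun n => |arcsinPowCoeff a n| :=
  .of_nonneg_of_le (fun _ => abs_nonneg _) (abs_arcsinPowCoeff_le a)
    (summable_arcsinCoeff.mul_right _)

-- The `+ 0` matches the recursion hypothesis of `one_sub_sq_mul_tsum_sub_mul_tsum` with `d = 0`.
lemma arcsinPowCoeff_zero_left_succ_mul (n : ℕ) :
    arcsinPowCoeff 0 (n + 1) * ((2 * n + 2) * (2 * n + 3))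
      = arcsinPowCoeff 0 n * (2 * n + 1) ^ 2 + 0 := by
  simp only [arcsinPowCoeff, rangeEsymm_zero_left, mul_one, add_zero]
  exact arcsinCoeff_succ_mul n

lemma arcsinPowCoeff_succ_succ_mul (a n : ℕ) :
    arcsinPowCoeff (a + 1) (n + 1) * ((2 * n + 2) * (2 * n + 3))
      = arcsinPowCoeff (a + 1) n * (2 * n + 1) ^ 2 + arcsinPowCoeff a n := by
  have hw : invOddSq n * (2 * n + 1) ^ 2 = 1 := by
    rw [invOddSq]
    field_simp
  simp only [arcsinPowCoeff, rangeEsymm_succ_succ]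
  linear_combination (rangeEsymm invOddSq (a + 1) n + invOddSq n * rangeEsymm invOddSq a n)
    * arcsinCoeff_succ_mul n + arcsinCoeff n * rangeEsymm invOddSq a n * hw

lemma summable_succ_pow_mul_geometric (k : ℕ) {r : ℝ} (hr0 : 0 ≤ r) (hr : r < 1) :
    Summable fun n : ℕ => ((n : ℝ) + 1) ^ k * r ^ n := by
  refine Summable.of_nonneg_of_le (fun n => by positivity) (fun n => ?_)
    (summable_descFactorial_mul_geometric_of_norm_lt_one k (r := r)
      (by rwa [Real.norm_of_nonneg hr0]))
  gcongr
  have := Nat.pow_sub_le_descFactorial (n + k) k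
  rw [show n + k + 1 - k = n + 1 by omega] at this
  exact_mod_cast this

lemma summable_mul_pow_of_abs_le {c : ℕ → ℝ} {e : ℕ → ℕ} {C : ℝ} {k : ℕ}
    (hc : ∀ n, |c n| ≤ C * ((n : ℝ) + 1) ^ k) (he : ∀ n, n ≤ e n) {x : ℝ} (hx : |x| < 1) :
    Summable fun n => c n * x ^ e n := by
  refine .of_norm_bounded ((summable_succ_pow_mul_geometric k (abs_nonneg x) hx).mul_left C)
    fun n => ?_
  rw [Real.norm_eq_abs, abs_mul, abs_pow, ← mul_assoc]
  exact mul_le_mul (hc n) (pow_le_pow_of_le_one (abs_nonneg x) hx.le (he n)) (by positivity)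
    ((abs_nonneg _).trans (hc n))

theorem hasDerivAt_tsum_mul_pow {c : ℕ → ℝ} {e : ℕ → ℕ} {C : ℝ} {k : ℕ}
    (hc : ∀ n, |c n| * e n ≤ C * ((n : ℝ) + 1) ^ k) (he : ∀ n, 2 * n ≤ e n) {x : ℝ}
    (hx : |x| < 1) :
    HasDerivAt (fun y => ∑' n, c n * y ^ e n) (∑' n, c n * (e n * x ^ (e n - 1))) x := by
  obtain ⟨r, hxr, hr⟩ := exists_between hx
  have hr0 : 0 < r := (abs_nonneg x).trans_lt hxr
  have hmem : ∀ {y}, y ∈ Set.Ioo (-r) r → |y| ≤ r := fun hy => abs_le.2 ⟨hy.1.le, hy.2.le⟩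
  refine hasDerivAt_tsum_of_isPreconnected
    ((summable_succ_pow_mul_geometric k hr0.le hr).mul_left C) isOpen_Ioo isPreconnected_Ioo
    (fun n y _ => (hasDerivAt_pow (e n) y).const_mul (c n)) (fun n y hy => ?_)
    (y₀ := 0) (by simp [hr0]) ?_ (abs_lt.1 hxr)
  · -- `2n ≤ e n` gives `n ≤ e n - 1`, so the derivative terms are dominated by `(n+1)^k rⁿ`
    rw [Real.norm_eq_abs, abs_mul, abs_mul, Nat.abs_cast, abs_pow, ← mul_assoc, ← mul_assoc]
    exact mul_le_mul (hc n) (pow_le_pow_of_le_one hr0.le hr.le (by have := he n; omega) |>.trans'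
      (pow_le_pow_left₀ (abs_nonneg y) (hmem hy) _)) (by positivity)
      ((by positivity : (0:ℝ) ≤ |c n| * e n).trans (hc n))
  · refine summable_of_ne_finset_zero (s := {0}) fun n hn => ?_
    have : e n ≠ 0 := by have := he n; simp at hn; omega
    simp [this]

noncomputable def oddPowerSeries (c : ℕ → ℝ) (x : ℝ) : ℝ := ∑' n, c n * x ^ (2 * n + 1)

lemma oddPowerSeries_zero (c : ℕ → ℝ) : oddPowerSeries c 0 = 0 := by
  simp [oddPowerSeries]

lemma tsum_mul_odd_mul_zero_pow (c : ℕ → ℝ) :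
    ∑' n, c n * (2 * n + 1) * (0 : ℝ) ^ (2 * n) = c 0 := by
  rw [tsum_eq_single 0 fun _ hn => by simp [hn]]
  simp

section OddPowerSeries

variable {c : ℕ → ℝ} {C : ℝ}

lemma summable_mul_mul_pow (hc : ∀ n, |c n| ≤ C) {p : ℕ → ℝ} {K : ℝ} {k : ℕ}
    (hp : ∀ n, |p n| ≤ K * ((n : ℝ) + 1) ^ k) {e : ℕ → ℕ} (he : ∀ n, n ≤ e n) {x : ℝ}
    (hx : |x| < 1) : Summable fun n => c n * p n * x ^ e n :=
  summable_mul_pow_of_abs_le (C := C * K) (fun n => by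
    rw [abs_mul, mul_assoc]
    exact mul_le_mul (hc n) (hp n) (abs_nonneg _) ((abs_nonneg _).trans (hc n))) he hx

lemma hasDerivAt_oddPowerSeries (hc : ∀ n, |c n| ≤ C) {x : ℝ} (hx : |x| < 1) :
    HasDerivAt (oddPowerSeries c) (∑' n, c n * (2 * n + 1) * x ^ (2 * n)) x := by
  have hb (n : ℕ) : |c n| * ((2 * n + 1 : ℕ) : ℝ) ≤ 2 * C * (n + 1) ^ 1 := by
    push_cast
    nlinarith [hc n, abs_nonneg (c n), (n.cast_nonneg : (0:ℝ) ≤ n)]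
  refine (hasDerivAt_tsum_mul_pow (e := fun n => 2 * n + 1) hb (fun n => by omega) hx).congr_deriv
    (tsum_congr fun n => ?_)
  push_cast
  ring

lemma hasDerivAt_tsum_mul_odd_mul_pow (hc : ∀ n, |c n| ≤ C) {x : ℝ} (hx : |x| < 1) :
    HasDerivAt (fun y => ∑' n, c n * (2 * n + 1) * y ^ (2 * n))
      (∑' n, c n * ((2 * n + 1) * (2 * n)) * x ^ (2 * n - 1)) x := by
  have hb (n : ℕ) : |c n * (2 * n + 1)| * ((2 * n : ℕ) : ℝ) ≤ 4 * C * (n + 1) ^ 2 := by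
    rw [abs_mul, abs_of_nonneg (by positivity : (0:ℝ) ≤ 2 * n + 1)]
    push_cast
    have hC : 0 ≤ C := (abs_nonneg _).trans (hc 0)
    nlinarith [mul_le_mul_of_nonneg_right (hc n) (by positivity : (0:ℝ) ≤ (2 * n + 1) * (2 * n)),
      mul_nonneg hC (n.cast_nonneg : (0:ℝ) ≤ n)]
  refine (hasDerivAt_tsum_mul_pow (e := fun n => 2 * n) hb (fun n => le_rfl) hx).congr_deriv
    (tsum_congr fun n => ?_)
  push_cast
  ring

lemma one_sub_sq_mul_tsum_sub_mul_tsum {d : ℕ → ℝ} (hc : ∀ n, |c n| ≤ C)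
    (hrec : ∀ n : ℕ, c (n + 1) * ((2 * n + 2) * (2 * n + 3)) = c n * (2 * n + 1) ^ 2 + d n)
    {x : ℝ} (hx : |x| < 1) :
    (1 - x ^ 2) * ∑' n, c n * ((2 * n + 1) * (2 * n)) * x ^ (2 * n - 1)
      - x * ∑' n, c n * (2 * n + 1) * x ^ (2 * n) = oddPowerSeries d x := by
  set A : ℕ → ℝ := fun n => c n * ((2 * n + 1) * (2 * n)) * x ^ (2 * n - 1)
  have hA : Summable A := summable_mul_mul_pow hc (K := 4) (k := 2)
    (fun n => by rw [abs_of_nonneg (by positivity)]; nlinarith) (fun n => by omega) hx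
  have hB : Summable fun n : ℕ => c n * (2 * n + 1) * x ^ (2 * n) :=
    summable_mul_mul_pow hc (K := 2) (k := 1)
      (fun n => by rw [abs_of_nonneg (by positivity)]; linarith) (fun n => by omega) hx
  have hE : Summable fun n : ℕ => c n * (2 * n + 1) ^ 2 * x ^ (2 * n + 1) :=
    summable_mul_mul_pow hc (K := 4) (k := 2)
      (fun n => by rw [abs_of_nonneg (by positivity)]; nlinarith [(n.cast_nonneg : (0:ℝ) ≤ n)])
      (fun n => by omega) hx
  have hsplit : ∑' n : ℕ, c n * (2 * n + 1) ^ 2 * x ^ (2 * n + 1)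
      = x ^ 2 * ∑' n, A n + x * ∑' n, c n * (2 * n + 1) * x ^ (2 * n) := by
    rw [← tsum_mul_left, ← tsum_mul_left, ← (hA.mul_left _).tsum_add (hB.mul_left _)]
    refine tsum_congr fun n => ?_
    rcases n with _ | m
    · simp [A, mul_comm]
    · simp only [A, show 2 * (m + 1) - 1 = 2 * m + 1 by omega]
      push_cast
      ring
  calc (1 - x ^ 2) * ∑' n, A n - x * ∑' n, c n * (2 * n + 1) * x ^ (2 * n)
      = ∑' n, A (n + 1) - ∑' n : ℕ, c n * (2 * n + 1) ^ 2 * x ^ (2 * n + 1) := by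
        rw [hsplit, hA.tsum_eq_zero_add]
        simp only [A, Nat.cast_zero, mul_zero, zero_mul, zero_add]
        ring
    _ = ∑' n, (A (n + 1) - c n * (2 * n + 1) ^ 2 * x ^ (2 * n + 1)) :=
        ((summable_nat_add_iff 1).2 hA).tsum_sub hE |>.symm
    _ = oddPowerSeries d x := by
        refine tsum_congr fun n => ?_
        simp only [A, show 2 * (n + 1) - 1 = 2 * n + 1 by omega]
        push_cast
        linear_combination x ^ (2 * n + 1) * hrec n

end OddPowerSeries

lemma abs_sin_lt_one {θ : ℝ} (hθ : θ ∈ Set.Ioo (-(π / 2)) (π / 2)) : |sin θ| < 1 := by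
  have hcos := cos_pos_of_mem_Ioo hθ
  have := sin_sq_add_cos_sq θ
  rw [← sq_lt_one_iff_abs_lt_one]
  nlinarith

section SinSubstitution

variable {c : ℕ → ℝ} {C : ℝ} {θ : ℝ}

lemma hasDerivAt_oddPowerSeries_sin (hc : ∀ n, |c n| ≤ C)
    (hθ : θ ∈ Set.Ioo (-(π / 2)) (π / 2)) :
    HasDerivAt (fun t => oddPowerSeries c (sin t))
      ((∑' n, c n * (2 * n + 1) * sin θ ^ (2 * n)) * cos θ) θ :=
  (hasDerivAt_oddPowerSeries hc (abs_sin_lt_one hθ)).comp θ (hasDerivAt_sin θ)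

lemma hasDerivAt_tsum_mul_odd_mul_sin_pow_mul_cos {d : ℕ → ℝ} (hc : ∀ n, |c n| ≤ C)
    (hrec : ∀ n : ℕ, c (n + 1) * ((2 * n + 2) * (2 * n + 3)) = c n * (2 * n + 1) ^ 2 + d n)
    (hθ : θ ∈ Set.Ioo (-(π / 2)) (π / 2)) :
    HasDerivAt (fun t => (∑' n, c n * (2 * n + 1) * sin t ^ (2 * n)) * cos t)
      (oddPowerSeries d (sin θ)) θ := by
  have hs := abs_sin_lt_one hθ
  have h := ((hasDerivAt_tsum_mul_odd_mul_pow hc hs).comp θ (hasDerivAt_sin θ)).mul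
    (hasDerivAt_cos θ)
  rw [← one_sub_sq_mul_tsum_sub_mul_tsum hc hrec hs, ← cos_sq']
  refine h.congr_deriv ?_
  simp only [Function.comp_apply]
  ring

end SinSubstitution

lemma continuous_oddPowerSeries_sin {c : ℕ → ℝ} (hc : Summable fun n => |c n|) :
    Continuous fun t => oddPowerSeries c (sin t) := by
  refine continuous_tsum (fun n => by fun_prop) hc fun n t => ?_
  rw [Real.norm_eq_abs, abs_mul, abs_pow]
  exact mul_le_of_le_one_right (abs_nonneg _) (pow_le_one₀ (abs_nonneg _) (abs_sin_le_one t))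

theorem IsOpen.eqOn_of_hasDerivAt_of_hasDerivAt {s : Set ℝ} (hs : IsOpen s)
    (hs' : IsPreconnected s) {t₀ : ℝ} (ht₀ : t₀ ∈ s) {f g f' g' f'' : ℝ → ℝ}
    (hf : ∀ t ∈ s, HasDerivAt f (f' t) t) (hg : ∀ t ∈ s, HasDerivAt g (g' t) t)
    (hf' : ∀ t ∈ s, HasDerivAt f' (f'' t) t) (hg' : ∀ t ∈ s, HasDerivAt g' (f'' t) t)
    (h₀ : f t₀ = g t₀) (h₀' : f' t₀ = g' t₀) : Set.EqOn f g s := by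
  have hd : Set.EqOn f' g' s :=
    hs.eqOn_of_deriv_eq hs' (fun t ht => (hf' t ht).differentiableAt.differentiableWithinAt)
      (fun t ht => (hg' t ht).differentiableAt.differentiableWithinAt)
      (fun t ht => by rw [(hf' t ht).deriv, (hg' t ht).deriv]) ht₀ h₀'
  exact hs.eqOn_of_deriv_eq hs' (fun t ht => (hf t ht).differentiableAt.differentiableWithinAt)
    (fun t ht => (hg t ht).differentiableAt.differentiableWithinAt)
    (fun t ht => by rw [(hf t ht).deriv, (hg t ht).deriv, hd ht]) ht₀ h₀

lemma hasDerivAt_pow_succ_div_factorial (m : ℕ) (t : ℝ) :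
    HasDerivAt (fun t : ℝ => t ^ (m + 1) / (m + 1).factorial) (t ^ m / m.factorial) t := by
  refine ((hasDerivAt_pow (m + 1) t).div_const ((m + 1).factorial : ℝ)).congr_deriv ?_
  rw [Nat.factorial_succ, Nat.add_sub_cancel]
  push_cast
  field_simp

lemma oddPowerSeries_arcsinPowCoeff_sin_eqOn_Ioo (a : ℕ) :
    Set.EqOn (fun t => oddPowerSeries (arcsinPowCoeff a) (sin t))
      (fun t => t ^ (2 * a + 1) / (2 * a + 1).factorial) (Set.Ioo (-(π / 2)) (π / 2)) := by
  have h0 : (0 : ℝ) ∈ Set.Ioo (-(π / 2)) (π / 2) := ⟨by linarith [pi_pos], by linarith [pi_pos]⟩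
  induction a with
  | zero =>
    refine isOpen_Ioo.eqOn_of_hasDerivAt_of_hasDerivAt isPreconnected_Ioo h0
      (fun t ht => hasDerivAt_oddPowerSeries_sin (abs_arcsinPowCoeff_le_pow 0) ht)
      (fun t _ => hasDerivAt_pow_succ_div_factorial 0 t)
      (fun t ht => hasDerivAt_tsum_mul_odd_mul_sin_pow_mul_cos (abs_arcsinPowCoeff_le_pow 0)
        arcsinPowCoeff_zero_left_succ_mul ht)
      (fun t _ => by simpa [oddPowerSeries] using hasDerivAt_const t (1 : ℝ))
      (by simp only [sin_zero, oddPowerSeries_zero]; simp) ?_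
    simp only [sin_zero, cos_zero, mul_one, tsum_mul_odd_mul_zero_pow]
    simp [arcsinPowCoeff, arcsinCoeff_zero]
  | succ a ih =>
    refine isOpen_Ioo.eqOn_of_hasDerivAt_of_hasDerivAt isPreconnected_Ioo h0
      (fun t ht => hasDerivAt_oddPowerSeries_sin (abs_arcsinPowCoeff_le_pow _) ht)
      (fun t _ => hasDerivAt_pow_succ_div_factorial (2 * a + 2) t)
      (fun t ht => hasDerivAt_tsum_mul_odd_mul_sin_pow_mul_cos (abs_arcsinPowCoeff_le_pow _)
        (arcsinPowCoeff_succ_succ_mul a) ht)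
      (fun t ht => (hasDerivAt_pow_succ_div_factorial (2 * a + 1) t).congr_deriv (ih ht).symm)
      (by simp only [sin_zero, oddPowerSeries_zero]; simp) ?_
    simp only [sin_zero, cos_zero, mul_one, tsum_mul_odd_mul_zero_pow]
    simp [arcsinPowCoeff]

lemma oddPowerSeries_arcsinPowCoeff_sin_eqOn (a : ℕ) :
    Set.EqOn (fun t => oddPowerSeries (arcsinPowCoeff a) (sin t))
      (fun t => t ^ (2 * a + 1) / (2 * a + 1).factorial) (Set.Icc (-(π / 2)) (π / 2)) :=
  (oddPowerSeries_arcsinPowCoeff_sin_eqOn_Ioo a).of_subset_closure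
    (continuous_oddPowerSeries_sin (summable_abs_arcsinPowCoeff a)).continuousOn
    (by fun_prop) Set.Ioo_subset_Icc_self (by rw [closure_Ioo (by linarith [pi_pos])])

theorem arcsin_odd_powers (a : ℕ) (x : ℝ) (hx : |x| ≤ 1) :
    Real.arcsin x ^ (2 * a + 1) / (Nat.factorial (2 * a + 1)) =
      ∑' n : ℕ, ((Nat.choose (2 * n) n : ℝ) / ((2 * (n : ℝ) + 1) * 4 ^ n)) *
        x ^ (2 * n + 1) * tHead a n := by
  obtain ⟨hx₁, hx₂⟩ := abs_le.1 hx
  have h := oddPowerSeries_arcsinPowCoeff_sin_eqOn a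
    ⟨neg_pi_div_two_le_arcsin x, arcsin_le_pi_div_two x⟩
  simp only [sin_arcsin hx₁ hx₂] at h
  rw [← h, oddPowerSeries]
  refine tsum_congr fun n => ?_
  rw [tHead_eq_rangeEsymm, arcsinPowCoeff, arcsinCoeff]
  ring
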